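/- The hyperstructure (H, +) is an Hv-group: it satisfies both weak associativity ((x+y)+z ∩ x+(y+z) ≠ ∅ for all x,y,z) and the reproduction axiom (x + H = H + x = H for all x ∈ H). -/
import Mathlib


inductive Hel : Type
  | a | b | A | B | C
deriving DecidableEq, Repr

open Hel

instance : Fintype Hel :=
  ⟨{a, b, A, B, C}, by intro x; cases x <;> decide⟩

def hop : Hel → Hel → Finset Hel
  | a, a => {a, A}
  | a, b => {a, b, C}
  | a, A => {a, A}
  | a, B => {a, b, B, C}
  | a, C => {a, b, A, C}
  | b, a => {a, b, C}
  | b, b => {b, B}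
  | b, A => {a, b, A, C}
  | b, B => {b, B}
  | b, C => {a, b, B, C}
  | A, a => {a, A}
  | A, b => {a, b, A, C}
  | A, A => {a, A}
  | A, B => {a, b, A, B, C}
  | A, C => {a, b, A, C}
  | B, a => {a, b, B, C}
  | B, b => {b, B}
  | B, A => {a, b, A, B, C}
  | B, B => {b, B}
  | B, C => {a, b, B, C}
  | C, a => {a, b, A, C}
  | C, b => {a, b, B, C}
  | C, A => {a, b, A, C}
  | C, B => {a, b, B, C}
  | C, C => {a, b, A, B, C}

def hopS (S T : Finset Hel) : Finset Hel :=
  S.biUnion fun s => T.biUnion fun t => hop s t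

theorem hop_Hv_group :
    (∀ x y z : Hel, (hopS (hop x y) {z} ∩ hopS {x} (hop y z)).Nonempty) ∧
    (∀ x : Hel, (Finset.univ.biUnion fun y => hop x y) = Finset.univ ∧
      (Finset.univ.biUnion fun y => hop y x) = Finset.univ) := by constructor <;> decide
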